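/- arXiv:1911.07369 — 3 statements merged into one kernel-verified Lean document; each statement's English description precedes it below -/
import Mathlib

section
/- For every real number x ≥ 7, ∑_{n≤x} d(n)² ≤ x·(log x)³. -/
/-!
Sending a pair of divisors `(a, b)` of `n` to `(gcd a b, a / gcd a b, b / gcd a b)`, whose product
is `lcm a b`, shows `d(n)² ≤ #{(g, u, v) : g u v ∣ n}`. Summing over `n ≤ x` gives
`∑_{g, u, v} ⌊x / (g u v)⌋ ≤ x ∑_{g u v ≤ x} 1 / (g u v)`, and summing one variable at a time with
`∑_{a ≤ y} log (y / a) ^ j / a ≤ L ^ j + L ^ (j + 1) / (j + 1)` (`L = log y`, comparison with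
`∫ log (y / t) ^ j / t dt`) bounds the triple sum by `1 + 3L + 3L²/2 + L³/6`, which is at most `L³`
once `L ≥ 3.1`, i.e. for `x ≥ 25`. On `[7, 25)` the sum is evaluated: on `[a, b)` it is at most its
value at `b - 1`, compared with `a (log a)³`, where `log a ≥ (p / q) log 2` whenever
`2 ^ p ≤ a ^ q`.
-/

open Finset Real

lemma mul_pow_mul_sub_le_pow_sub_pow {R : Type*} [CommRing R] [LinearOrder R]
    [IsStrictOrderedRing R] {a b : R} (hb : 0 ≤ b) (hba : b ≤ a) (n : ℕ) :
    (n + 1) * b ^ n * (a - b) ≤ a ^ (n + 1) - b ^ (n + 1) := by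
  rw [← geom_sum₂_mul]
  gcongr ?_ * _
  calc (n + 1) * b ^ n = ∑ i ∈ range (n + 1), b ^ i * b ^ (n + 1 - 1 - i) := by
        rw [sum_congr rfl fun i hi => by rw [← pow_add, Nat.add_sub_cancel,
          Nat.add_sub_cancel' (Nat.lt_succ_iff.1 (mem_range.1 hi))]]
        simp
    _ ≤ ∑ i ∈ range (n + 1), a ^ i * b ^ (n + 1 - 1 - i) := by gcongr

lemma inv_add_one_le_log_add_one_sub_log {m : ℝ} (hm : 0 < m) :
    (m + 1)⁻¹ ≤ log (m + 1) - log m := by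
  have h := one_sub_inv_le_log_of_pos (x := (m + 1) / m) (by positivity)
  rw [log_div (by positivity) hm.ne', inv_div] at h
  have : 1 - m / (m + 1) = (m + 1)⁻¹ := by field_simp; ring
  linarith

lemma log_div_succ_pow_div_le {y m : ℝ} (j : ℕ) (hm : 0 < m) (hmy : m + 1 ≤ y) :
    log (y / (m + 1)) ^ j / (m + 1) ≤
      (log (y / m) ^ (j + 1) - log (y / (m + 1)) ^ (j + 1)) / (j + 1) := by
  set A := log (y / m)
  set B := log (y / (m + 1))
  have hB : 0 ≤ B := log_nonneg ((one_le_div (by positivity)).2 hmy)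
  have hAB : (m + 1)⁻¹ ≤ A - B := by
    have hy : 0 < y := by linarith
    simp only [A, B, log_div hy.ne' hm.ne', log_div hy.ne' (by positivity : m + 1 ≠ 0)]
    linarith [inv_add_one_le_log_add_one_sub_log hm]
  rw [le_div_iff₀ (by positivity)]
  calc B ^ j / (m + 1) * (j + 1) = (j + 1) * B ^ j * (m + 1)⁻¹ := by ring
    _ ≤ (j + 1) * B ^ j * (A - B) := by gcongr
    _ ≤ A ^ (j + 1) - B ^ (j + 1) := mul_pow_mul_sub_le_pow_sub_pow hB
      (by linarith [inv_pos.2 (by linarith : (0 : ℝ) < m + 1)]) j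

lemma sum_log_div_pow_div_le (j : ℕ) {y : ℝ} (hy : 1 ≤ y) :
    ∑ a ∈ Icc 1 ⌊y⌋₊, log (y / a) ^ j / a ≤ log y ^ j + log y ^ (j + 1) / (j + 1) := by
  have telescope : ∀ n : ℕ, 1 ≤ n → (n : ℝ) ≤ y → ∑ a ∈ Icc 1 n, log (y / a) ^ j / a ≤
      log y ^ j + (log y ^ (j + 1) - log (y / n) ^ (j + 1)) / (j + 1) := by
    intro n hn
    induction n, hn using Nat.le_induction with
    | base => simp
    | succ m hm ih =>
      intro hmy
      push_cast at hmy ⊢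
      rw [sum_Icc_succ_top (by omega)]
      have := log_div_succ_pow_div_le j (by positivity : (0 : ℝ) < m) hmy
      have ih := ih (by linarith)
      simp only [sub_div] at this ih ⊢
      push_cast
      linarith
  have hfloor : 1 ≤ ⌊y⌋₊ := Nat.le_floor (by simpa using hy)
  have htail : 0 ≤ log (y / ⌊y⌋₊) ^ (j + 1) :=
    pow_nonneg (log_nonneg ((one_le_div (by positivity)).2 (Nat.floor_le (by linarith)))) _
  have := telescope _ hfloor (Nat.floor_le (by linarith))
  have hj : (0 : ℝ) < j + 1 := by positivity
  calc _ ≤ _ := this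
    _ ≤ log y ^ j + log y ^ (j + 1) / (j + 1) := by gcongr; linarith

/-- `iterHarmonic k y = ∑_{a₁ ⋯ a_k ≤ y} 1 / (a₁ ⋯ a_k)`. -/
noncomputable def iterHarmonic : ℕ → ℝ → ℝ
  | 0, _ => 1
  | k + 1, y => ∑ a ∈ Icc 1 ⌊y⌋₊, iterHarmonic k (y / a) / a

lemma iterHarmonic_nonneg (k : ℕ) (y : ℝ) : 0 ≤ iterHarmonic k y := by
  induction k generalizing y with
  | zero => simp [iterHarmonic]
  | succ k ih => exact sum_nonneg fun a _ => div_nonneg (ih _) a.cast_nonneg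

lemma iterHarmonic_succ_of_lt_one (k : ℕ) {y : ℝ} (hy : y < 1) : iterHarmonic (k + 1) y = 0 := by
  simp [iterHarmonic, Nat.floor_eq_zero.2 hy]

lemma one_le_div_of_mem_Icc_floor {y : ℝ} {a : ℕ} (ha : a ∈ Icc 1 ⌊y⌋₊) : 1 ≤ y / a := by
  obtain ⟨ha1, hay⟩ := mem_Icc.1 ha
  rw [one_le_div (by exact_mod_cast ha1)]
  exact (Nat.le_floor_iff' (by omega)).1 hay

lemma sum_Icc_le_mul_iterHarmonic_succ (k M : ℕ) {y : ℝ} (hy : 0 ≤ y) {φ : ℝ → ℝ}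
    (hφ_zero : ∀ t < 1, φ t = 0) (hφ_le : ∀ t, 0 ≤ t → φ t ≤ t * iterHarmonic k t) :
    ∑ a ∈ Icc 1 M, φ (y / a) ≤ y * iterHarmonic (k + 1) y := by
  have hsupp : ∀ a ∈ Icc 1 M, φ (y / a) ≠ 0 → a ≤ ⌊y⌋₊ := by
    intro a ha hφa
    by_contra! hya
    have ha0 : (0 : ℝ) < a := by exact_mod_cast (mem_Icc.1 ha).1
    exact hφa (hφ_zero _ ((div_lt_one ha0).2 ((Nat.floor_lt hy).1 hya)))
  rw [← sum_filter_of_ne hsupp, iterHarmonic, mul_sum]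
  calc ∑ a ∈ Icc 1 M with a ≤ ⌊y⌋₊, φ (y / a)
      ≤ ∑ a ∈ Icc 1 M with a ≤ ⌊y⌋₊, y / a * iterHarmonic k (y / a) :=
        sum_le_sum fun a _ => hφ_le _ (by positivity)
    _ ≤ ∑ a ∈ Icc 1 ⌊y⌋₊, y / a * iterHarmonic k (y / a) := by
        refine sum_le_sum_of_subset_of_nonneg (fun a ha => ?_) fun a _ _ => ?_
        · simp only [mem_filter, mem_Icc] at ha ⊢
          omega
        · exact mul_nonneg (by positivity) (iterHarmonic_nonneg _ _)
    _ = ∑ a ∈ Icc 1 ⌊y⌋₊, y * (iterHarmonic k (y / a) / a) := by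
        refine sum_congr rfl fun a _ => by ring

lemma iterHarmonic_one_le {y : ℝ} (hy : 1 ≤ y) : iterHarmonic 1 y ≤ 1 + log y := by
  simpa [iterHarmonic] using sum_log_div_pow_div_le 0 hy

lemma iterHarmonic_two_le {y : ℝ} (hy : 1 ≤ y) :
    iterHarmonic 2 y ≤ 1 + 2 * log y + log y ^ 2 / 2 := by
  calc iterHarmonic 2 y = ∑ a ∈ Icc 1 ⌊y⌋₊, iterHarmonic 1 (y / a) / a := rfl
    _ ≤ ∑ a ∈ Icc 1 ⌊y⌋₊, (log (y / a) ^ 0 / a + log (y / a) ^ 1 / a) :=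
        sum_le_sum fun a ha => by
          rw [pow_zero, pow_one, ← add_div]
          gcongr
          exact iterHarmonic_one_le (one_le_div_of_mem_Icc_floor ha)
    _ ≤ (log y ^ 0 + log y ^ 1 / 1) + (log y ^ 1 + log y ^ 2 / 2) := by
        rw [sum_add_distrib]
        exact add_le_add (by simpa using sum_log_div_pow_div_le 0 hy)
          (by simpa [one_add_one_eq_two] using sum_log_div_pow_div_le 1 hy)
    _ = 1 + 2 * log y + log y ^ 2 / 2 := by ring

lemma iterHarmonic_three_le {y : ℝ} (hy : 1 ≤ y) :
    iterHarmonic 3 y ≤ 1 + 3 * log y + 3 / 2 * log y ^ 2 + log y ^ 3 / 6 := by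
  calc iterHarmonic 3 y = ∑ a ∈ Icc 1 ⌊y⌋₊, iterHarmonic 2 (y / a) / a := rfl
    _ ≤ ∑ a ∈ Icc 1 ⌊y⌋₊,
          (log (y / a) ^ 0 / a + 2 * (log (y / a) ^ 1 / a) + log (y / a) ^ 2 / a / 2) :=
        sum_le_sum fun a ha => by
          have := iterHarmonic_two_le (one_le_div_of_mem_Icc_floor ha)
          have ha0 : (0 : ℝ) < a := by exact_mod_cast (mem_Icc.1 ha).1
          rw [div_le_iff₀ ha0]
          field_simp
          linarith
    _ ≤ (log y ^ 0 + log y ^ 1 / 1) + 2 * (log y ^ 1 + log y ^ 2 / 2)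
          + (log y ^ 2 + log y ^ 3 / 3) / 2 := by
        rw [sum_add_distrib, sum_add_distrib, ← mul_sum, ← sum_div]
        gcongr
        · simpa using sum_log_div_pow_div_le 0 hy
        · simpa [one_add_one_eq_two] using sum_log_div_pow_div_le 1 hy
        · have h := sum_log_div_pow_div_le 2 hy
          norm_num at h
          exact h
    _ = 1 + 3 * log y + 3 / 2 * log y ^ 2 + log y ^ 3 / 6 := by ring

lemma sum_card_filter_dvd_eq_sum_div {ι : Type*} (s : Finset ι) (f : ι → ℕ) (N : ℕ) :
    ∑ n ∈ Icc 1 N, #{i ∈ s | f i ∣ n} = ∑ i ∈ s, N / f i := by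
  simp_rw [card_filter]
  rw [sum_comm]
  refine sum_congr rfl fun i _ => ?_
  rw [← card_filter, ← Nat.Ioc_filter_dvd_card_eq_div, ← Icc_add_one_left_eq_Ioc, zero_add]

lemma mem_Icc_of_dvd {d n N : ℕ} (hd : d ∣ n) (hn : n ≠ 0) (hnN : n ≤ N) : d ∈ Icc 1 N := by
  have hn0 : 0 < n := Nat.pos_of_ne_zero hn
  exact mem_Icc.2 ⟨Nat.pos_of_dvd_of_pos hd hn0, (Nat.le_of_dvd hn0 hd).trans hnN⟩

lemma sq_card_divisors_le {n N : ℕ} (hn : n ≠ 0) (hnN : n ≤ N) :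
    n.divisors.card ^ 2 ≤ #{t ∈ Icc 1 N ×ˢ Icc 1 N ×ˢ Icc 1 N | t.1 * t.2.1 * t.2.2 ∣ n} := by
  rw [sq, ← card_product]
  refine card_le_card_of_injOn
    (fun p => (p.1.gcd p.2, p.1 / p.1.gcd p.2, p.2 / p.1.gcd p.2)) ?_ ?_
  · rintro ⟨a, b⟩ hab
    simp only [coe_product, Set.mem_prod, mem_coe, Nat.mem_divisors] at hab
    obtain ⟨⟨ha, -⟩, hb, -⟩ := hab
    have hlcm : a.gcd b * (a / a.gcd b) * (b / a.gcd b) = a.lcm b := by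
      rw [Nat.mul_div_cancel' (Nat.gcd_dvd_left a b), ← Nat.mul_div_assoc a (Nat.gcd_dvd_right a b)]
      rfl
    have hdvd : a.gcd b * (a / a.gcd b) * (b / a.gcd b) ∣ n := hlcm ▸ Nat.lcm_dvd ha hb
    simp only [coe_filter, Set.mem_ofPred_eq, mem_product]
    exact ⟨⟨mem_Icc_of_dvd ((dvd_mul_right _ _).trans ((dvd_mul_right _ _).trans hdvd)) hn hnN,
      mem_Icc_of_dvd ((dvd_mul_left _ _).trans ((dvd_mul_right _ _).trans hdvd)) hn hnN,
      mem_Icc_of_dvd ((dvd_mul_left _ _).trans hdvd) hn hnN⟩, hdvd⟩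
  · rintro ⟨a, b⟩ - ⟨c, d⟩ - h
    simp only [Prod.mk.injEq] at h
    obtain ⟨hg, ha, hb⟩ := h
    simp only [Prod.mk.injEq]
    constructor
    · rw [← Nat.mul_div_cancel' (Nat.gcd_dvd_left a b),
        ← Nat.mul_div_cancel' (Nat.gcd_dvd_left c d), ha, hg]
    · rw [← Nat.mul_div_cancel' (Nat.gcd_dvd_right a b),
        ← Nat.mul_div_cancel' (Nat.gcd_dvd_right c d), hb, hg]

lemma sum_sq_card_divisors_le_sum_div (N : ℕ) :
    ∑ n ∈ Icc 1 N, n.divisors.card ^ 2 ≤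
      ∑ t ∈ Icc 1 N ×ˢ Icc 1 N ×ˢ Icc 1 N, N / (t.1 * t.2.1 * t.2.2) := by
  rw [← sum_card_filter_dvd_eq_sum_div]
  exact sum_le_sum fun n hn => sq_card_divisors_le (by simp at hn; omega) (mem_Icc.1 hn).2

lemma sum_sq_card_divisors_le_mul_iterHarmonic {x : ℝ} (hx : 0 ≤ x) :
    ∑ n ∈ Icc 1 ⌊x⌋₊, (n.divisors.card : ℝ) ^ 2 ≤ x * iterHarmonic 3 x := by
  have floor_step : ∀ y : ℝ, 0 ≤ y → ∑ v ∈ Icc 1 ⌊x⌋₊, (⌊y / v⌋₊ : ℝ) ≤ y * iterHarmonic 1 y :=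
    fun y hy => sum_Icc_le_mul_iterHarmonic_succ (φ := fun t => (⌊t⌋₊ : ℝ)) 0 _ hy
      (fun t ht => by simp [Nat.floor_eq_zero.2 ht])
      (fun t ht => by simpa [iterHarmonic] using Nat.floor_le ht)
  have harmonic_step : ∀ k, ∀ y : ℝ, 0 ≤ y → ∑ a ∈ Icc 1 ⌊x⌋₊,
      y / a * iterHarmonic (k + 1) (y / a) ≤ y * iterHarmonic (k + 2) y :=
    fun k y hy => sum_Icc_le_mul_iterHarmonic_succ (k + 1) _ hy
      (fun t ht => by simp [iterHarmonic_succ_of_lt_one k ht]) (fun _ _ => le_rfl)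
  calc ∑ n ∈ Icc 1 ⌊x⌋₊, (n.divisors.card : ℝ) ^ 2
      ≤ ∑ t ∈ Icc 1 ⌊x⌋₊ ×ˢ Icc 1 ⌊x⌋₊ ×ˢ Icc 1 ⌊x⌋₊, ((⌊x⌋₊ / (t.1 * t.2.1 * t.2.2) : ℕ) : ℝ) := by
        exact_mod_cast sum_sq_card_divisors_le_sum_div ⌊x⌋₊
    _ = ∑ g ∈ Icc 1 ⌊x⌋₊, ∑ u ∈ Icc 1 ⌊x⌋₊, ∑ v ∈ Icc 1 ⌊x⌋₊, (⌊x / g / u / v⌋₊ : ℝ) := by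
        simp only [sum_product, ← Nat.floor_div_natCast, Nat.cast_mul, div_div]
    _ ≤ ∑ g ∈ Icc 1 ⌊x⌋₊, ∑ u ∈ Icc 1 ⌊x⌋₊, x / g / u * iterHarmonic 1 (x / g / u) :=
        sum_le_sum fun g _ => sum_le_sum fun u _ => floor_step _ (by positivity)
    _ ≤ ∑ g ∈ Icc 1 ⌊x⌋₊, x / g * iterHarmonic 2 (x / g) :=
        sum_le_sum fun g _ => harmonic_step 0 _ (by positivity)
    _ ≤ x * iterHarmonic 3 x := harmonic_step 1 x hx

lemma le_log_of_two_pow_le {a p q : ℕ} (hq : 0 < q) (h : 2 ^ p ≤ a ^ q) :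
    p / q * 0.693 ≤ log a := by
  have hlog : p * log 2 ≤ q * log a := by
    rw [← log_pow, ← log_pow]
    exact log_le_log (by positivity) (by exact_mod_cast h)
  have hq' : (0 : ℝ) < q := by exact_mod_cast hq
  rw [div_mul_eq_mul_div, div_le_iff₀ hq']
  nlinarith [log_two_gt_d9, (Nat.cast_nonneg p : (0 : ℝ) ≤ p)]

lemma iterHarmonic_three_le_log_pow {y : ℝ} (hy : 25 ≤ y) : iterHarmonic 3 y ≤ log y ^ 3 := by
  have hL : 3.1 ≤ log y := by
    have h25 : (9 : ℝ) / 2 * 0.693 ≤ log 25 := by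
      exact_mod_cast le_log_of_two_pow_le (a := 25) (p := 9) (q := 2) (by norm_num) (by norm_num)
    linarith [log_le_log (by norm_num) hy]
  have := iterHarmonic_three_le (by linarith : 1 ≤ y)
  nlinarith [mul_nonneg (mul_nonneg (sub_nonneg.2 hL) (sub_nonneg.2 hL)) (sub_nonneg.2 hL)]

lemma sum_sq_card_divisors_le_of_mem_Ico {x : ℝ} {a b p q S : ℕ} (hq : 0 < q)
    (hax : a ≤ x) (hxb : x < b) (h2 : 2 ^ p ≤ a ^ q)
    (hS : ∑ n ∈ Icc 1 (b - 1), n.divisors.card ^ 2 ≤ S) (hSa : (S : ℝ) ≤ a * (p / q * 0.693) ^ 3) :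
    ∑ n ∈ Icc 1 ⌊x⌋₊, (n.divisors.card : ℝ) ^ 2 ≤ x * log x ^ 3 := by
  have ha : 0 < a := Nat.pos_of_ne_zero fun ha => by simp [ha, hq.ne'] at h2
  have hloga : p / q * 0.693 ≤ log x :=
    (le_log_of_two_pow_le hq h2).trans (log_le_log (by exact_mod_cast ha) hax)
  have hx0 : 0 ≤ x := (Nat.cast_nonneg a).trans hax
  have hfloor : ⌊x⌋₊ ≤ b - 1 := by
    have := (Nat.floor_lt hx0).2 hxb
    omega
  calc ∑ n ∈ Icc 1 ⌊x⌋₊, (n.divisors.card : ℝ) ^ 2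
      ≤ ∑ n ∈ Icc 1 (b - 1), (n.divisors.card : ℝ) ^ 2 :=
        sum_le_sum_of_subset_of_nonneg (Icc_subset_Icc_right hfloor) fun _ _ _ => by positivity
    _ ≤ S := by exact_mod_cast hS
    _ ≤ a * (p / q * 0.693) ^ 3 := hSa
    _ ≤ x * log x ^ 3 := by gcongr

theorem sum_divisors_sq_le (x : ℝ) (hx : 7 ≤ x) :
    (∑ n ∈ Finset.Icc 1 ⌊x⌋₊, ((n.divisors.card : ℝ)) ^ 2) ≤ x * (Real.log x) ^ 3 := by
  rcases le_or_gt 25 x with h25 | h25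
  · exact (sum_sq_card_divisors_le_mul_iterHarmonic (by linarith)).trans
      (mul_le_mul_of_nonneg_left (iterHarmonic_three_le_log_pow h25) (by linarith))
  rcases lt_or_ge x 8 with h8 | h8
  · exact sum_sq_card_divisors_le_of_mem_Ico (a := 7) (p := 8) (q := 3) (S := 42)
      (by norm_num) (by exact_mod_cast hx) h8 (by norm_num) (by decide) (by norm_num)
  rcases lt_or_ge x 10 with h10 | h10
  · exact sum_sq_card_divisors_le_of_mem_Ico (a := 8) (p := 3) (q := 1) (S := 67)
      (by norm_num) (by exact_mod_cast h8) h10 (by norm_num) (by decide) (by norm_num)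
  rcases lt_or_ge x 12 with h12 | h12
  · exact sum_sq_card_divisors_le_of_mem_Ico (a := 10) (p := 3) (q := 1) (S := 87)
      (by norm_num) (by exact_mod_cast h10) h12 (by norm_num) (by decide) (by norm_num)
  rcases lt_or_ge x 16 with h16 | h16
  · exact sum_sq_card_divisors_le_of_mem_Ico (a := 12) (p := 7) (q := 2) (S := 159)
      (by norm_num) (by exact_mod_cast h12) h16 (by norm_num) (by decide) (by norm_num)
  rcases lt_or_ge x 18 with h18 | h18
  · exact sum_sq_card_divisors_le_of_mem_Ico (a := 16) (p := 4) (q := 1) (S := 188)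
      (by norm_num) (by exact_mod_cast h16) h18 (by norm_num) (by decide) (by norm_num)
  · exact sum_sq_card_divisors_le_of_mem_Ico (a := 18) (p := 4) (q := 1) (S := 364)
      (by norm_num) (by exact_mod_cast h18) h25 (by norm_num) (by decide) (by norm_num)
end

section
/- For every positive integer n, d(n)² = ∑_{k : k² ∣ n} μ(k)·d₄(n/k²), where the sum is over all positive integers k whose square divides n. -/
/-!
Writing `g = gcd x y`, `x = a g`, `y = b g`, pairs `(x, y)` of divisors of `n` correspond to
factorisations `n = a b g d` with `a, b` coprime. Expanding the coprimality condition as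
`∑_{k ∣ gcd a b} μ k` turns the count into `∑_k μ k · #{abcd = n : k ∣ a, k ∣ b}`, and dividing
`a` and `b` by `k` identifies the inner set with the factorisations of `n / k²`.
-/

/-- `d₄ n` is the number of ordered quadruples `(a,b,c,d)` of positive integers
with `a*b*c*d = n`. -/
noncomputable def d4 (n : ℕ) : ℕ :=
  Nat.card {p : ℕ × ℕ × ℕ × ℕ //
    p.1 * p.2.1 * p.2.2.1 * p.2.2.2 = n ∧ 0 < p.1 ∧ 0 < p.2.1 ∧ 0 < p.2.2.1 ∧ 0 < p.2.2.2}

open Finset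

open scoped ArithmeticFunction.Moebius

namespace ArithmeticFunction

theorem sum_divisors_moebius (n : ℕ) : ∑ d ∈ n.divisors, (μ d : ℤ) = if n = 1 then 1 else 0 := by
  rw [← coe_mul_zeta_apply, moebius_mul_coe_zeta, one_apply]

theorem card_filter_eq_one_eq_sum_moebius {α : Type*} (s : Finset α) (g : α → ℕ) (t : Finset ℕ)
    (hg : ∀ x ∈ s, g x ≠ 0 ∧ (g x).divisors ⊆ t) :
    (#{x ∈ s | g x = 1} : ℤ) = ∑ k ∈ t, μ k * #{x ∈ s | k ∣ g x} := by
  have hdiv : ∀ x ∈ s, {k ∈ t | k ∣ g x} = (g x).divisors := fun x hx => by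
    ext k
    simp only [mem_filter, Nat.mem_divisors, and_iff_left (hg x hx).1]
    exact ⟨And.right, fun hk => ⟨(hg x hx).2 (Nat.mem_divisors.2 ⟨hk, (hg x hx).1⟩), hk⟩⟩
  calc (#{x ∈ s | g x = 1} : ℤ)
      = ∑ x ∈ s, ∑ k ∈ (g x).divisors, (μ k : ℤ) := by
        rw [← sum_boole]; exact sum_congr rfl fun x _ => (sum_divisors_moebius _).symm
    _ = ∑ x ∈ s, ∑ k ∈ t, if k ∣ g x then (μ k : ℤ) else 0 := by
        refine sum_congr rfl fun x hx => ?_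
        rw [← sum_filter, hdiv x hx]
    _ = ∑ k ∈ t, μ k * #{x ∈ s | k ∣ g x} := by
        rw [sum_comm]
        refine sum_congr rfl fun k _ => ?_
        rw [← sum_filter, sum_const, nsmul_eq_mul, mul_comm]

end ArithmeticFunction

namespace Nat

def quadruples (n : ℕ) : Finset (ℕ × ℕ × ℕ × ℕ) :=
  {p ∈ n.divisors ×ˢ n.divisors ×ˢ n.divisors ×ˢ n.divisors |
    p.1 * p.2.1 * p.2.2.1 * p.2.2.2 = n}

theorem mem_quadruples {n : ℕ} {p : ℕ × ℕ × ℕ × ℕ} :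
    p ∈ quadruples n ↔ p.1 * p.2.1 * p.2.2.1 * p.2.2.2 = n ∧ n ≠ 0 := by
  obtain ⟨a, b, c, d⟩ := p
  simp only [quadruples, mem_filter, mem_product, mem_divisors]
  constructor
  · rintro ⟨⟨⟨-, hn⟩, -⟩, h⟩
    exact ⟨h, hn⟩
  · rintro ⟨rfl, hn⟩
    exact ⟨⟨⟨⟨b * c * d, by ring⟩, hn⟩, ⟨⟨a * c * d, by ring⟩, hn⟩, ⟨⟨a * b * d, by ring⟩, hn⟩,
      ⟨a * b * c, by ring⟩, hn⟩, rfl⟩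

theorem gcd_dvd_of_mem_quadruples {n : ℕ} {p : ℕ × ℕ × ℕ × ℕ} (hp : p ∈ quadruples n) :
    gcd p.1 p.2.1 ∣ n := by
  obtain ⟨rfl, -⟩ := mem_quadruples.1 hp
  exact (gcd_dvd_left _ _).trans ⟨p.2.1 * p.2.2.1 * p.2.2.2, by ring⟩

theorem card_filter_coprime_quadruples (n : ℕ) :
    #{p ∈ quadruples n | Coprime p.1 p.2.1} = #n.divisors ^ 2 := by
  rw [sq, ← card_product]
  refine card_nbij' (fun p => (p.1 * p.2.2.1, p.2.1 * p.2.2.1))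
    (fun q => (q.1 / gcd q.1 q.2, q.2 / gcd q.1 q.2, gcd q.1 q.2, n / lcm q.1 q.2))
    ?_ ?_ ?_ ?_
  · rintro ⟨a, b, c, d⟩ hp
    simp only [coe_filter, Set.mem_ofPred_eq, mem_quadruples] at hp
    obtain ⟨⟨rfl, hn⟩, -⟩ := hp
    simp only [coe_product, Set.mem_prod, mem_coe, mem_divisors]
    exact ⟨⟨⟨b * d, by ring⟩, hn⟩, ⟨a * d, by ring⟩, hn⟩
  · rintro ⟨x, y⟩ hq
    simp only [coe_product, Set.mem_prod, mem_coe, mem_divisors] at hq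
    obtain ⟨⟨hx, hn⟩, hy, -⟩ := hq
    have hg : 0 < gcd x y := gcd_pos_of_pos_left y (pos_of_dvd_of_pos hx (pos_of_ne_zero hn))
    have hlcm : x / gcd x y * (y / gcd x y) * gcd x y = lcm x y := by
      rw [mul_assoc, Nat.div_mul_cancel (gcd_dvd_right x y),
        Nat.div_mul_right_comm (gcd_dvd_left x y), lcm]
    simp only [coe_filter, Set.mem_ofPred_eq, mem_quadruples]
    exact ⟨⟨by rw [hlcm, Nat.mul_div_cancel' (lcm_dvd hx hy)], hn⟩,
      coprime_div_gcd_div_gcd hg⟩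
  · rintro ⟨a, b, c, d⟩ hp
    simp only [coe_filter, Set.mem_ofPred_eq, mem_quadruples] at hp
    obtain ⟨⟨rfl, hn⟩, hab⟩ := hp
    have habc : a * b * c ≠ 0 := left_ne_zero_of_mul hn
    have hc : 0 < c := pos_of_ne_zero (right_ne_zero_of_mul habc)
    have hgcd : gcd (a * c) (b * c) = c := by rw [gcd_mul_right, hab, one_mul]
    have hlcm : lcm (a * c) (b * c) = a * b * c := by rw [lcm_mul_right, hab.lcm_eq_mul]
    simp only [hgcd, hlcm, Nat.mul_div_cancel _ hc, Prod.mk.injEq, true_and]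
    exact Nat.mul_div_cancel_left d (pos_of_ne_zero habc)
  · rintro ⟨x, y⟩ -
    simp only [Prod.mk.injEq]
    exact ⟨Nat.div_mul_cancel (gcd_dvd_left x y), Nat.div_mul_cancel (gcd_dvd_right x y)⟩

theorem card_filter_dvd_dvd_quadruples (n : ℕ) {k : ℕ} (hk : k ≠ 0) :
    #{p ∈ quadruples n | k ∣ p.1 ∧ k ∣ p.2.1} =
      if k ^ 2 ∣ n then #(quadruples (n / k ^ 2)) else 0 := by
  split_ifs with hkn
  · symm
    refine card_nbij (fun q => (k * q.1, k * q.2.1, q.2.2.1, q.2.2.2)) ?_ ?_ ?_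
    · rintro ⟨a, b, c, d⟩ hq
      rw [mem_coe, mem_quadruples] at hq
      obtain ⟨habcd, hnk⟩ := hq
      rw [coe_filter, Set.mem_ofPred_eq, mem_quadruples]
      refine ⟨⟨?_, fun hn => hnk (by simp [hn])⟩, dvd_mul_right k a, dvd_mul_right k b⟩
      dsimp only
      rw [show k * a * (k * b) * c * d = k ^ 2 * (a * b * c * d) by ring, habcd,
        Nat.mul_div_cancel' hkn]
    · rintro ⟨a, b, c, d⟩ - ⟨a', b', c', d'⟩ - h
      simp only [Prod.mk.injEq, mul_right_inj' hk] at h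
      simp only [h]
    · rintro ⟨_, _, c, d⟩ hp
      rw [coe_filter, Set.mem_ofPred_eq, mem_quadruples] at hp
      obtain ⟨⟨habcd, hn⟩, ⟨a, rfl⟩, ⟨b, rfl⟩⟩ := hp
      have hn' : n = k ^ 2 * (a * b * c * d) := by rw [← habcd]; ring
      refine ⟨(a, b, c, d), ?_, rfl⟩
      rw [mem_coe, mem_quadruples, hn', Nat.mul_div_cancel_left _ (by positivity)]
      exact ⟨rfl, right_ne_zero_of_mul (hn' ▸ hn)⟩
  · rw [Finset.card_eq_zero, filter_eq_empty_iff]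
    rintro ⟨a, b, c, d⟩ hp ⟨hka, hkb⟩
    obtain ⟨rfl, -⟩ := mem_quadruples.1 hp
    exact hkn (Dvd.dvd.mul_right (Dvd.dvd.mul_right (sq k ▸ mul_dvd_mul hka hkb) c) d)

end Nat

theorem d4_eq_card_quadruples {n : ℕ} (hn : n ≠ 0) : d4 n = #(Nat.quadruples n) := by
  rw [d4, ← Nat.card_eq_finsetCard]
  refine Nat.card_congr (Equiv.subtypeEquivRight fun p => ?_)
  rw [Nat.mem_quadruples]
  constructor
  · rintro ⟨h, -⟩
    exact ⟨h, hn⟩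
  · rintro ⟨h, -⟩
    have hne : p.1 * p.2.1 * p.2.2.1 * p.2.2.2 ≠ 0 := h ▸ hn
    simp only [mul_ne_zero_iff] at hne
    exact ⟨h, by omega⟩

theorem divisors_sq_eq_sum_moebius_d4 (n : ℕ) (hn : 0 < n) :
    ((n.divisors.card : ℤ)) ^ 2 =
      ∑ k ∈ (Finset.Icc 1 n).filter (fun k => k ^ 2 ∣ n),
        ArithmeticFunction.moebius k * (d4 (n / k ^ 2) : ℤ) := by
  have hgcd : ∀ p ∈ Nat.quadruples n,
      Nat.gcd p.1 p.2.1 ≠ 0 ∧ (Nat.gcd p.1 p.2.1).divisors ⊆ Icc 1 n := fun p hp => by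
    have hg := Nat.gcd_dvd_of_mem_quadruples hp
    refine ⟨ne_zero_of_dvd_ne_zero hn.ne' hg, (Nat.divisors_subset_of_dvd hn.ne' hg).trans ?_⟩
    exact fun k hk => mem_Icc.2 ⟨Nat.pos_of_mem_divisors hk, Nat.divisor_le hk⟩
  calc ((n.divisors.card : ℤ)) ^ 2
      = #{p ∈ Nat.quadruples n | Nat.gcd p.1 p.2.1 = 1} := by
        rw [← Nat.cast_pow, ← Nat.card_filter_coprime_quadruples]
    _ = ∑ k ∈ Icc 1 n, μ k * #{p ∈ Nat.quadruples n | k ∣ Nat.gcd p.1 p.2.1} :=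
        ArithmeticFunction.card_filter_eq_one_eq_sum_moebius _ _ _ hgcd
    _ = ∑ k ∈ Icc 1 n, if k ^ 2 ∣ n then μ k * (d4 (n / k ^ 2) : ℤ) else 0 := by
        refine sum_congr rfl fun k hk => ?_
        have hk0 : k ≠ 0 := Nat.pos_iff_ne_zero.mp (mem_Icc.mp hk).1
        simp_rw [Nat.dvd_gcd_iff]
        rw [Nat.card_filter_dvd_dvd_quadruples n hk0]
        split_ifs with hkn
        · rw [d4_eq_card_quadruples (Nat.div_pos (Nat.le_of_dvd hn hkn) (by positivity)).ne']
        · rw [Nat.cast_zero, mul_zero]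
    _ = _ := (sum_filter _ _).symm
end

section
/- For every real number x ≥ 1, ∑_{n≤x} d(n)² = ∑_{k≤√x} μ(k)·(∑_{m≤x/k²} d₄(m)). -/
/-!
The Dirichlet series of `d(n)²` is `ζ(s)⁴ / ζ(2s)`. Concretely, `n ↦ d(n)²` and `d * d = d₄` are
multiplicative with `d(p^i)² = (i+1)²` and `6 d₄(p^m) = (m+1)(m+2)(m+3)`, so that
`(i+1)² = d₄(p^i) - d₄(p^(i-2))` (the last term absent for `i < 2`). Hence `d² = μ₂ * d₄`, where
`μ₂(k²) = μ(k)` and `μ₂` vanishes off the squares, and summing a convolution `μ₂ * g` over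
`n ≤ x` gives `∑_{k ≤ √x} μ(k) ∑_{m ≤ x/k²} g(m)`.
-/

open Finset ArithmeticFunction
open scoped ArithmeticFunction.sigma ArithmeticFunction.Moebius

theorem Nat.floor_real_sqrt_eq_nat_sqrt_floor (x : ℝ) : ⌊√x⌋₊ = Nat.sqrt ⌊x⌋₊ := by
  refine eq_of_forall_le_iff fun k => ?_
  rcases eq_or_ne k 0 with rfl | hk
  · simp
  rw [Nat.le_floor_iff' hk, Real.le_sqrt' (by positivity), Nat.le_sqrt',
    Nat.le_floor_iff' (pow_ne_zero 2 hk), Nat.cast_pow]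

theorem Nat.card_divisorsAntidiagonal (n : ℕ) : #n.divisorsAntidiagonal = #n.divisors := by
  rw [← Nat.map_div_right_divisors, card_map]

theorem Nat.Prime.isSquare_pow_iff {p i : ℕ} (hp : p.Prime) : IsSquare (p ^ i) ↔ Even i := by
  refine ⟨fun ⟨r, hr⟩ => ⟨r.factorization p, ?_⟩, fun h => h.isSquare_pow p⟩
  have hr0 : r ≠ 0 := by rintro rfl; simp [hp.ne_zero] at hr
  simpa [hp.factorization_self, Nat.factorization_mul hr0 hr0] using
    congrArg (fun n => n.factorization p) hr

theorem Nat.Coprime.isSquare_mul_iff {m n : ℕ} (h : m.Coprime n) :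
    IsSquare (m * n) ↔ IsSquare m ∧ IsSquare n := by
  refine ⟨fun ⟨r, hr⟩ => ?_, fun ⟨hm, hn⟩ => hm.mul hn⟩
  rw [← sq] at hr
  obtain ⟨a, ha⟩ := exists_eq_pow_of_mul_eq_pow (Nat.isUnit_iff.mpr h) hr
  obtain ⟨b, hb⟩ :=
    exists_eq_pow_of_mul_eq_pow (Nat.isUnit_iff.mpr h.symm) ((mul_comm n m).trans hr)
  exact ⟨⟨a, ha.trans (sq a)⟩, ⟨b, hb.trans (sq b)⟩⟩

namespace ArithmeticFunction

variable {R : Type*}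

theorem mul_apply_prime_pow [Semiring R] (f g : ArithmeticFunction R) {p : ℕ} (hp : p.Prime)
    (i : ℕ) : (f * g) (p ^ i) = ∑ j ∈ range (i + 1), f (p ^ j) * g (p ^ (i - j)) := by
  rw [mul_apply, Nat.sum_divisorsAntidiagonal (fun a b => f a * g b), Nat.sum_divisors_prime_pow hp]
  exact sum_congr rfl fun j hj => by rw [Nat.pow_div (Nat.lt_succ_iff.mp (mem_range.mp hj)) hp.pos]

def onSquares [Zero R] (f : ArithmeticFunction R) : ArithmeticFunction R :=
  ⟨fun n => if IsSquare n then f n.sqrt else 0, by simp⟩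

section Zero
variable [Zero R] (f : ArithmeticFunction R)

theorem onSquares_apply (n : ℕ) : f.onSquares n = if IsSquare n then f n.sqrt else 0 := rfl

@[simp]
theorem onSquares_apply_sq (k : ℕ) : f.onSquares (k ^ 2) = f k := by
  rw [onSquares_apply, if_pos (IsSquare.sq k), Nat.sqrt_eq']

theorem onSquares_apply_of_not_isSquare {n : ℕ} (hn : ¬IsSquare n) : f.onSquares n = 0 :=
  if_neg hn

theorem onSquares_apply_prime_pow {p : ℕ} (hp : p.Prime) (i : ℕ) :
    f.onSquares (p ^ i) = if Even i then f (p ^ (i / 2)) else 0 := by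
  split_ifs with hi
  · rw [← Nat.two_mul_div_two_of_even hi, pow_mul', onSquares_apply_sq,
      Nat.mul_div_cancel_left _ two_pos]
  · exact f.onSquares_apply_of_not_isSquare (hp.isSquare_pow_iff.not.mpr hi)

end Zero

theorem IsMultiplicative.onSquares [MonoidWithZero R] {f : ArithmeticFunction R}
    (hf : f.IsMultiplicative) : f.onSquares.IsMultiplicative := by
  refine ⟨by simpa using (f.onSquares_apply_sq 1).trans hf.map_one, fun {m n} hmn => ?_⟩
  by_cases hsq : IsSquare m ∧ IsSquare n
  · obtain ⟨⟨a, rfl⟩, ⟨b, rfl⟩⟩ := hsq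
    simp only [← sq, ← mul_pow, onSquares_apply_sq] at hmn ⊢
    rw [Nat.coprime_pow_left_iff two_pos, Nat.coprime_pow_right_iff two_pos] at hmn
    exact hf.map_mul_of_coprime hmn
  · rw [onSquares_apply_of_not_isSquare _ (hmn.isSquare_mul_iff.not.mpr hsq)]
    rcases not_and_or.mp hsq with h | h <;> simp [onSquares_apply_of_not_isSquare _ h]

theorem sum_Ioc_onSquares_mul [Semiring R] (f g : ArithmeticFunction R) (N : ℕ) :
    ∑ n ∈ Ioc 0 N, (f.onSquares * g) n =
      ∑ k ∈ Ioc 0 N.sqrt, f k * ∑ m ∈ Ioc 0 (N / k ^ 2), g m := by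
  have mem_sq_iff {k : ℕ} : k ∈ Ioc 0 N.sqrt ↔ k ^ 2 ∈ Ioc 0 N := by
    simp [Nat.le_sqrt', pos_iff_ne_zero]
  rw [sum_Ioc_mul_eq_sum_sum, ← sum_subset (s₁ := (Ioc 0 N.sqrt).image (· ^ 2)), sum_image]
  · simp_rw [onSquares_apply_sq]
  · exact fun a _ b _ hab => Nat.pow_left_injective two_ne_zero hab
  · exact image_subset_iff.mpr fun k hk => mem_sq_iff.mp hk
  · intro n hn hn'
    rw [onSquares_apply_of_not_isSquare, zero_mul]
    rintro ⟨k, rfl⟩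
    exact hn' (mem_image.mpr ⟨k, mem_sq_iff.mpr (by rwa [sq]), sq k⟩)

theorem onSquares_moebius_apply_prime_pow {p : ℕ} (hp : p.Prime) (j : ℕ) :
    onSquares μ (p ^ j) = if j = 0 then 1 else if j = 2 then -1 else 0 := by
  rw [onSquares_apply_prime_pow _ hp]
  obtain ⟨k, rfl | rfl⟩ := Nat.even_or_odd' j
  · rcases k with _ | _ | k <;> simp [moebius_apply_prime hp, moebius_apply_prime_pow hp]
  · simp

end ArithmeticFunction

theorem six_mul_sum_range_mul_sub (c : ℤ) (n : ℕ) :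
    6 * ∑ j ∈ range n, ((j : ℤ) + 1) * (c - j + 1) = n * (n + 1) * (3 * c - 2 * n + 5) := by
  induction n with
  | zero => simp
  | succ n ih => rw [sum_range_succ, mul_add, ih]; push_cast; ring

theorem six_mul_sigma_zero_mul_sigma_zero_apply_prime_pow {p : ℕ} (hp : p.Prime) (m : ℕ) :
    6 * ((σ 0 * σ 0) (p ^ m) : ℤ) = (m + 1) * (m + 2) * (m + 3) := by
  have hterm : ∀ j ∈ range (m + 1),
      ((σ 0 (p ^ j) * σ 0 (p ^ (m - j)) : ℕ) : ℤ) = (j + 1) * (m - j + 1) := by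
    intro j hj
    rw [sigma_zero_apply_prime_pow hp, sigma_zero_apply_prime_pow hp, Nat.cast_mul,
      Nat.cast_add_one, Nat.cast_add_one, Nat.cast_sub (Nat.lt_succ_iff.mp (mem_range.mp hj))]
  rw [mul_apply_prime_pow _ _ hp, Nat.cast_sum, sum_congr rfl hterm, six_mul_sum_range_mul_sub]
  push_cast
  ring

theorem natCoe_pmul_sigma_zero :
    (↑(pmul (σ 0) (σ 0)) : ArithmeticFunction ℤ) = onSquares μ * ↑(σ 0 * σ 0) := by
  have hσ := isMultiplicative_sigma (k := 0)
  refine (IsMultiplicative.eq_iff_eq_on_prime_powers _ (hσ.pmul hσ).natCast _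
    (isMultiplicative_moebius.onSquares.mul (hσ.mul hσ).natCast)).mpr fun p i hp => ?_
  have hS := six_mul_sigma_zero_mul_sigma_zero_apply_prime_pow hp
  rw [mul_apply_prime_pow _ _ hp]
  simp only [natCoe_apply, pmul_apply, sigma_zero_apply_prime_pow hp,
    onSquares_moebius_apply_prime_pow hp]
  rcases lt_or_ge i 2 with hi | hi
  · rw [sum_eq_single 0 (fun j hj h0 => by
      rw [if_neg h0, if_neg (by simp at hj; omega), zero_mul]) (by simp)]
    simp only [if_pos, Nat.sub_zero, one_mul, Nat.cast_mul, Nat.cast_add_one]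
    have hSi := hS i
    interval_cases i <;> push_cast at hSi ⊢ <;> linarith
  · obtain ⟨t, rfl⟩ := Nat.exists_eq_add_of_le' hi
    rw [sum_eq_add_of_mem 0 2 (by simp) (by simp) (by simp) (fun j _ hj => by simp [hj])]
    have h2 := hS (t + 2)
    push_cast at h2
    simp only [Nat.cast_mul, Nat.cast_add, Nat.cast_ofNat, Nat.cast_one, ↓reduceIte, tsub_zero,
      one_mul, OfNat.ofNat_ne_zero, add_tsub_cancel_right, neg_mul]
    linarith [hS t]

theorem d4_eq_card_sigma (n : ℕ) : d4 n = #(n.divisorsAntidiagonal.sigma fun uv =>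
    uv.1.divisorsAntidiagonal ×ˢ uv.2.divisorsAntidiagonal) := by
  rw [d4, ← Nat.card_eq_finsetCard]
  refine Nat.card_congr
    { toFun := fun ⟨(a, b, c, d), h⟩ => ⟨⟨(a * b, c * d), ((a, b), (c, d))⟩, ?_⟩
      invFun := fun ⟨⟨(u, v), ((a, b), (c, d))⟩, h⟩ => ⟨(a, b, c, d), ?_⟩
      left_inv := fun _ => rfl
      right_inv := ?_ }
  · obtain ⟨rfl, ha, hb, hc, hd⟩ := h
    simp only [mem_sigma, mem_product, Nat.mem_divisorsAntidiagonal]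
    dsimp only at ha hb hc hd
    exact ⟨⟨by ring, by positivity⟩, ⟨trivial, by positivity⟩, trivial, by positivity⟩
  · simp only [mem_sigma, mem_product, Nat.mem_divisorsAntidiagonal] at h
    obtain ⟨⟨rfl, -⟩, ⟨rfl, hab⟩, rfl, hcd⟩ := h
    rw [mul_ne_zero_iff] at hab hcd
    exact ⟨by ring, Nat.pos_of_ne_zero hab.1, Nat.pos_of_ne_zero hab.2,
      Nat.pos_of_ne_zero hcd.1, Nat.pos_of_ne_zero hcd.2⟩
  · rintro ⟨⟨⟨u, v⟩, ⟨a, b⟩, ⟨c, d⟩⟩, h⟩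
    simp only [mem_sigma, mem_product, Nat.mem_divisorsAntidiagonal] at h
    obtain ⟨-, ⟨rfl, -⟩, ⟨rfl, -⟩⟩ := h
    rfl

theorem d4_eq_sigma_zero_mul_sigma_zero (n : ℕ) : d4 n = (σ 0 * σ 0) n := by
  simp only [d4_eq_card_sigma, card_sigma, card_product, mul_apply, sigma_zero_apply,
    Nat.card_divisorsAntidiagonal]

theorem sum_divisors_sq_eq_sum_moebius_d4_general (x : ℝ) :
    (∑ n ∈ Finset.Icc 1 ⌊x⌋₊, ((n.divisors.card : ℤ)) ^ 2) =
      ∑ k ∈ Finset.Icc 1 ⌊Real.sqrt x⌋₊,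
        ArithmeticFunction.moebius k *
          ∑ m ∈ Finset.Icc 1 ⌊x / (k : ℝ) ^ 2⌋₊, (d4 m : ℤ) := by
  have hIcc (N : ℕ) : Icc 1 N = Ioc 0 N := Icc_add_one_left_eq_Ioc 0 N
  calc ∑ n ∈ Icc 1 ⌊x⌋₊, (#n.divisors : ℤ) ^ 2
      = ∑ n ∈ Ioc 0 ⌊x⌋₊, (onSquares μ * ↑(σ 0 * σ 0)) n := by
        rw [hIcc, ← natCoe_pmul_sigma_zero]
        simp [natCoe_apply, pmul_apply, sigma_zero_apply, sq]
    _ = ∑ k ∈ Ioc 0 (Nat.sqrt ⌊x⌋₊), μ k * ∑ m ∈ Ioc 0 (⌊x⌋₊ / k ^ 2), ((σ 0 * σ 0) m : ℤ) :=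
        sum_Ioc_onSquares_mul _ _ _
    _ = _ := by
        simp_rw [hIcc, Nat.floor_real_sqrt_eq_nat_sqrt_floor, ← Nat.cast_pow, Nat.floor_div_natCast,
          d4_eq_sigma_zero_mul_sigma_zero]

theorem sum_divisors_sq_eq_sum_moebius_d4 (x : ℝ) (hx : 1 ≤ x) :
    (∑ n ∈ Finset.Icc 1 ⌊x⌋₊, ((n.divisors.card : ℤ)) ^ 2) =
      ∑ k ∈ Finset.Icc 1 ⌊Real.sqrt x⌋₊,
        ArithmeticFunction.moebius k *
          ∑ m ∈ Finset.Icc 1 ⌊x / (k : ℝ) ^ 2⌋₊, (d4 m : ℤ) :=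
  sum_divisors_sq_eq_sum_moebius_d4_general x
end
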